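/- Let ε > 0, n ≥ 2, s = 2·(log n)/ε, let x* be a global minimizer of f with R = √(f(x*)), and let x_1 belong to the convex hull of {a_1, …, a_n}. Let (x_t) be any sequence with x_1 as above such that the accelerated-descent guarantee holds for some κ ≥ 1: for all t ≥ 1, g_s(x_t) − g_s(x*) ≤ ( ‖x_1 − x*‖² + g_s(x_1) − g_s(x*) )·exp(−(t−1)/√κ). Then for all t ≥ 1, f(x_t) ≤ 5·R² + ε/2. -/

import Mathlib

lemma softmax_lower_aux {d n : ℕ} (hne : (Finset.univ : Finset (Fin n)).Nonempty)
    {s : ℝ} (hspos : 0 < s) (a : Fin n → EuclideanSpace ℝ (Fin d))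
    (z : EuclideanSpace ℝ (Fin d)) :
    (Finset.univ.sup' hne fun i => ‖z - a i‖ ^ 2) ≤
      (1 / s) * Real.log (∑ i, Real.exp (s * ‖z - a i‖ ^ 2)) := by
  obtain ⟨i0, -, hi0⟩ := Finset.exists_mem_eq_sup' hne (fun i => ‖z - a i‖ ^ 2)
  have h1 : Real.exp (s * (Finset.univ.sup' hne fun i => ‖z - a i‖ ^ 2)) ≤
      ∑ i, Real.exp (s * ‖z - a i‖ ^ 2) := by
    rw [hi0]
    exact Finset.single_le_sum (f := fun i => Real.exp (s * ‖z - a i‖ ^ 2))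
      (fun i _ => (Real.exp_pos _).le) (Finset.mem_univ i0)
  have h2 : s * (Finset.univ.sup' hne fun i => ‖z - a i‖ ^ 2) ≤
      Real.log (∑ i, Real.exp (s * ‖z - a i‖ ^ 2)) := by
    have := Real.log_le_log (Real.exp_pos _) h1
    rwa [Real.log_exp] at this
  have h3 := mul_le_mul_of_nonneg_left h2 (le_of_lt (one_div_pos.mpr hspos))
  calc (Finset.univ.sup' hne fun i => ‖z - a i‖ ^ 2)
      = (1/s) * (s * (Finset.univ.sup' hne fun i => ‖z - a i‖ ^ 2)) := by
        field_simp
    _ ≤ _ := h3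

lemma softmax_upper_aux {d n : ℕ} (hne : (Finset.univ : Finset (Fin n)).Nonempty)
    {s : ℝ} (hspos : 0 < s) (a : Fin n → EuclideanSpace ℝ (Fin d))
    (z : EuclideanSpace ℝ (Fin d)) :
    (1 / s) * Real.log (∑ i, Real.exp (s * ‖z - a i‖ ^ 2)) ≤
      (Finset.univ.sup' hne fun i => ‖z - a i‖ ^ 2) + Real.log n / s := by
  set M := (Finset.univ.sup' hne fun i => ‖z - a i‖ ^ 2) with hM
  have h1 : ∑ i, Real.exp (s * ‖z - a i‖ ^ 2) ≤ n * Real.exp (s * M) := by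
    calc ∑ i, Real.exp (s * ‖z - a i‖ ^ 2)
        ≤ ∑ _i : Fin n, Real.exp (s * M) :=
          Finset.sum_le_sum fun i _ => Real.exp_le_exp.mpr
            (mul_le_mul_of_nonneg_left (hM ▸ Finset.le_sup' (fun i => ‖z - a i‖ ^ 2) (Finset.mem_univ i)) hspos.le)
      _ = n * Real.exp (s * M) := by simp
  have hn0 : (0:ℝ) < n := by
    have := Finset.univ_nonempty_iff.mp hne
    have : 0 < n := Fin.pos_iff_nonempty.mpr this
    exact_mod_cast this
  have h2 : Real.log (∑ i, Real.exp (s * ‖z - a i‖ ^ 2)) ≤ Real.log n + s * M := by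
    have hpos : (0:ℝ) < ∑ i, Real.exp (s * ‖z - a i‖ ^ 2) :=
      Finset.sum_pos (fun i _ => Real.exp_pos _) hne
    calc Real.log (∑ i, Real.exp (s * ‖z - a i‖ ^ 2))
        ≤ Real.log (n * Real.exp (s * M)) := Real.log_le_log hpos h1
      _ = Real.log n + s * M := by
          rw [Real.log_mul (ne_of_gt hn0) (Real.exp_ne_zero _), Real.log_exp]
  have h3 := mul_le_mul_of_nonneg_left h2 (le_of_lt (one_div_pos.mpr hspos))
  calc (1 / s) * Real.log (∑ i, Real.exp (s * ‖z - a i‖ ^ 2))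
      ≤ (1/s) * (Real.log n + s * M) := h3
    _ = M + Real.log n / s := by field_simp; ring

/-- For the minimal bounding sphere problem with
`f x = max_i ‖x − a i‖²`, `g_s x = (1/s) log (∑ i, exp (s ‖x − a i‖²))`,
`s = 2 log n / ε`, a global minimizer `x*` with `R = √(f x*)`, and a sequence `(x t)`
starting in the convex hull of the points satisfying the accelerated-descent guarantee
for some `κ ≥ 1`, every iterate satisfies `f (x t) ≤ 5 R² + ε/2`. -/
theorem bounding_sphere_iterate_value_bound {d n : ℕ} (hn : 2 ≤ n)
    (ε : ℝ) (hε : 0 < ε) (s : ℝ) (hs : s = 2 * Real.log n / ε)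
    (a : Fin n → EuclideanSpace ℝ (Fin d))
    (xstar : EuclideanSpace ℝ (Fin d))
    (hmin : ∀ z : EuclideanSpace ℝ (Fin d),
      (Finset.univ.sup' (Finset.univ_nonempty_iff.mpr ⟨⟨0, by omega⟩⟩)
          fun i => ‖xstar - a i‖ ^ 2) ≤
        Finset.univ.sup' (Finset.univ_nonempty_iff.mpr ⟨⟨0, by omega⟩⟩)
          fun i => ‖z - a i‖ ^ 2)
    (R : ℝ)
    (hR : R = Real.sqrt (Finset.univ.sup' (Finset.univ_nonempty_iff.mpr ⟨⟨0, by omega⟩⟩)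
      fun i => ‖xstar - a i‖ ^ 2))
    (x : ℕ → EuclideanSpace ℝ (Fin d))
    (hx₁ : x 1 ∈ convexHull ℝ (Set.range a))
    (κ : ℝ) (hκ : 1 ≤ κ)
    (hguar : ∀ t : ℕ, 1 ≤ t →
      (1 / s) * Real.log (∑ i, Real.exp (s * ‖x t - a i‖ ^ 2)) -
          (1 / s) * Real.log (∑ i, Real.exp (s * ‖xstar - a i‖ ^ 2)) ≤
        (‖x 1 - xstar‖ ^ 2 +
            (1 / s) * Real.log (∑ i, Real.exp (s * ‖x 1 - a i‖ ^ 2)) -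
            (1 / s) * Real.log (∑ i, Real.exp (s * ‖xstar - a i‖ ^ 2))) *
          Real.exp (-((t : ℝ) - 1) / Real.sqrt κ)) :
    ∀ t : ℕ, 1 ≤ t →
      (Finset.univ.sup' (Finset.univ_nonempty_iff.mpr ⟨⟨0, by omega⟩⟩)
          fun i => ‖x t - a i‖ ^ 2) ≤ 5 * R ^ 2 + ε / 2 := by
  have hne : (Finset.univ : Finset (Fin n)).Nonempty :=
    Finset.univ_nonempty_iff.mpr ⟨⟨0, by omega⟩⟩
  intro t ht
  have hn1 : (1:ℝ) < n := by
    have : (2:ℝ) ≤ n := by exact_mod_cast hn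
    linarith
  have hlogn : 0 < Real.log n := Real.log_pos hn1
  have hspos : 0 < s := by rw [hs]; positivity
  have hlogs : Real.log n / s = ε / 2 := by
    rw [hs]; field_simp
  have hFnonneg : (0:ℝ) ≤ Finset.univ.sup' hne fun i => ‖xstar - a i‖ ^ 2 := by
    obtain ⟨i0⟩ := Finset.univ_nonempty_iff.mp hne
    exact le_trans (sq_nonneg _) (Finset.le_sup' (fun i => ‖xstar - a i‖ ^ 2) (Finset.mem_univ i0))
  have hR0 : 0 ≤ R := by rw [hR]; exact Real.sqrt_nonneg _
  have hR2 : R ^ 2 = Finset.univ.sup' hne fun i => ‖xstar - a i‖ ^ 2 := by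
    rw [hR]; exact Real.sq_sqrt hFnonneg
  have hball : ∀ i, ‖xstar - a i‖ ≤ R := by
    intro i
    have h1 : ‖xstar - a i‖ ^ 2 ≤ R ^ 2 := by
      rw [hR2]; exact Finset.le_sup' (fun i => ‖xstar - a i‖ ^ 2) (Finset.mem_univ i)
    have := Real.sqrt_le_sqrt h1
    rwa [Real.sqrt_sq (norm_nonneg _), Real.sqrt_sq hR0] at this
  have hsub : Set.range a ⊆ Metric.closedBall xstar R := by
    rintro _ ⟨i, rfl⟩
    rw [Metric.mem_closedBall, dist_comm, dist_eq_norm]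
    exact hball i
  have hx1R : ‖x 1 - xstar‖ ≤ R := by
    have := convexHull_min hsub (convex_closedBall _ _) hx₁
    rwa [Metric.mem_closedBall, dist_eq_norm] at this
  have hx1sq : ‖x 1 - xstar‖ ^ 2 ≤ R ^ 2 :=
    pow_le_pow_left₀ (norm_nonneg _) hx1R 2
  have hFx1 : (Finset.univ.sup' hne fun i => ‖x 1 - a i‖ ^ 2) ≤ 4 * R ^ 2 := by
    apply Finset.sup'_le
    intro i _
    have h1 : ‖x 1 - a i‖ ≤ 2 * R := by
      calc ‖x 1 - a i‖ = ‖(x 1 - xstar) + (xstar - a i)‖ := by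
            congr 1; abel
        _ ≤ ‖x 1 - xstar‖ + ‖xstar - a i‖ := norm_add_le _ _
        _ ≤ 2 * R := by linarith [hball i]
    nlinarith [norm_nonneg (x 1 - a i)]
  have hexp : Real.exp (-((t : ℝ) - 1) / Real.sqrt κ) ≤ 1 := by
    rw [Real.exp_le_one_iff]
    apply div_nonpos_of_nonpos_of_nonneg
    · have : (1:ℝ) ≤ t := by exact_mod_cast ht
      linarith
    · exact Real.sqrt_nonneg _
  have key := hguar t ht
  have hFGt := softmax_lower_aux hne hspos a (x t)
  have hGFstar := softmax_upper_aux hne hspos a xstar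
  have hGF1 := softmax_upper_aux hne hspos a (x 1)
  rw [hlogs] at hGFstar hGF1
  show (Finset.univ.sup' hne fun i => ‖x t - a i‖ ^ 2) ≤ 5 * R ^ 2 + ε / 2
  set B := ‖x 1 - xstar‖ ^ 2 +
      (1 / s) * Real.log (∑ i, Real.exp (s * ‖x 1 - a i‖ ^ 2)) -
      (1 / s) * Real.log (∑ i, Real.exp (s * ‖xstar - a i‖ ^ 2)) with hBdef
  rcases le_or_gt B 0 with hB0 | hB0
  · have hBE : B * Real.exp (-((t : ℝ) - 1) / Real.sqrt κ) ≤ 0 :=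
      mul_nonpos_of_nonpos_of_nonneg hB0 (Real.exp_pos _).le
    have hsq : (0:ℝ) ≤ R ^ 2 := sq_nonneg _
    linarith [hFGt, hGFstar, key, hR2.ge, hR2.le]
  · have hBE : B * Real.exp (-((t : ℝ) - 1) / Real.sqrt κ) ≤ B :=
      mul_le_of_le_one_right hB0.le hexp
    linarith [hFGt, hGF1, key, hFx1, hx1sq]
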